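/- arXiv:1506.07959 — 5 statements merged into one kernel-verified Lean document; each statement's English description precedes it below -/
import Mathlib

section
/- Let z_1, …, z_T be independent Bernoulli random variables with P(z_i = 1) = p_i ∈ [0,1], let Y = z_1 + … + z_T, and set p̄ = (p_1 + … + p_T)/T. If p̄ > 0, then E[1/(Y+1)] ≤ (1 − (1 − p̄)^{T+1}) / ((T+1) · p̄). -/
/-!
Since `1 / (n + 1) = ∫₀¹ xⁿ dx`, Fubini gives `E[1/(Y+1)] = ∫₀¹ E[x^Y] dx`, and by independence
`E[x^Y] = ∏ᵢ (1 - pᵢ + pᵢ x)`. By AM-GM this product is at most `(1 - p̄ + p̄ x)^T`, whose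
integral over `[0, 1]` is the stated bound.
-/

open MeasureTheory ProbabilityTheory

open Finset in
theorem Real.prod_le_arith_mean_pow {ι : Type*} (s : Finset ι) (f : ι → ℝ)
    (hf : ∀ i ∈ s, 0 ≤ f i) : ∏ i ∈ s, f i ≤ ((∑ i ∈ s, f i) / #s) ^ #s := by
  rcases s.eq_empty_or_nonempty with rfl | hs
  · simp
  have hamgm := Real.geom_mean_le_arith_mean s (fun _ ↦ 1) f (fun _ _ ↦ zero_le_one)
    (by simpa using hs) hf
  simp only [Real.rpow_one, sum_const, nsmul_eq_mul, mul_one, one_mul] at hamgm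
  calc ∏ i ∈ s, f i = ((∏ i ∈ s, f i) ^ (#s : ℝ)⁻¹) ^ #s :=
        (Real.rpow_inv_natCast_pow (prod_nonneg hf) hs.card_ne_zero).symm
    _ ≤ ((∑ i ∈ s, f i) / #s) ^ #s :=
        pow_le_pow_left₀ (Real.rpow_nonneg (prod_nonneg hf) _) hamgm _

theorem integral_one_sub_add_mul_pow {c : ℝ} (hc : c ≠ 0) (n : ℕ) :
    ∫ x in (0 : ℝ)..1, (1 - c + c * x) ^ n = (1 - (1 - c) ^ (n + 1)) / ((n + 1) * c) := by
  have h := intervalIntegral.integral_comp_mul_add (a := 0) (b := 1) (fun y : ℝ ↦ y ^ n) hc (1 - c)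
  simp only [mul_zero, zero_add, mul_one, add_sub_cancel, integral_pow, one_pow,
    smul_eq_mul] at h
  simp_rw [add_comm (1 - c)]
  rw [h]
  field_simp

section

variable {Ω : Type*} [MeasurableSpace Ω] {μ : Measure Ω}

theorem integral_one_div_succ_eq_intervalIntegral_integral_pow [IsFiniteMeasure μ] {Y : Ω → ℕ}
    (hY : Measurable Y) :
    ∫ ω, 1 / ((Y ω : ℝ) + 1) ∂μ = ∫ x in (0 : ℝ)..1, ∫ ω, x ^ Y ω ∂μ := by
  have hinv : ∀ n : ℕ, 1 / ((n : ℝ) + 1) = ∫ x in (0 : ℝ)..1, x ^ n := by simp [integral_pow]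
  simp_rw [hinv]
  refine (intervalIntegral_integral_swap ?_).symm
  rw [Set.uIoc_of_le zero_le_one]
  refine Integrable.of_bound (C := 1)
    (measurable_fst.pow (hY.comp measurable_snd)).aestronglyMeasurable ?_
  filter_upwards [Measure.quasiMeasurePreserving_fst.ae (ae_restrict_mem measurableSet_Ioc)]
    with ⟨x, ω⟩ ⟨hx0, hx1⟩
  rw [Function.uncurry_apply_pair, norm_pow, Real.norm_of_nonneg hx0.le]
  exact pow_le_one₀ hx0.le hx1

theorem iIndepFun.integral_pow_sum {ι : Type*} [Fintype ι] {z : ι → Ω → ℕ}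
    (hz : ∀ i, Measurable (z i)) (hindep : iIndepFun z μ) (x : ℝ) :
    ∫ ω, x ^ (∑ i, z i ω) ∂μ = ∏ i, ∫ ω, x ^ z i ω ∂μ := by
  simp_rw [← Finset.prod_pow_eq_pow_sum]
  exact hindep.integral_fun_prod_comp (f := fun _ n ↦ x ^ n) (fun i ↦ (hz i).aemeasurable)
    (fun _ ↦ measurable_from_nat.aestronglyMeasurable)

theorem integral_pow_of_bernoulli [IsProbabilityMeasure μ] {z : Ω → ℕ} (hz : Measurable z)
    (hval : ∀ ω, z ω = 0 ∨ z ω = 1) {p : ℝ} (hp0 : 0 ≤ p)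
    (hp : μ {ω | z ω = 1} = ENNReal.ofReal p) (x : ℝ) :
    ∫ ω, x ^ z ω ∂μ = 1 - p + p * x := by
  have hS : MeasurableSet {ω | z ω = 1} := hz (measurableSet_singleton 1)
  have hsplit : (fun ω ↦ x ^ z ω) = fun ω ↦ {ω | z ω = 1}.indicator (fun _ ↦ x - 1) ω + 1 := by
    ext ω
    rcases hval ω with h | h <;> simp [h]
  rw [hsplit, integral_add ((integrable_const _).indicator hS) (integrable_const 1),
    integral_indicator_const _ hS, measureReal_def, hp, ENNReal.toReal_ofReal hp0]
  simp only [smul_eq_mul, integral_const, probReal_univ]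
  ring

end

theorem negative_moment_le_of_indep_bernoulli_general
    {Ω : Type*} [MeasurableSpace Ω] (μ : Measure Ω) [IsProbabilityMeasure μ]
    (T : ℕ) (z : Fin T → Ω → ℕ) (p : Fin T → ℝ)
    (hmeas : ∀ i, Measurable (z i))
    (hval : ∀ i, ∀ ω, z i ω = 0 ∨ z i ω = 1)
    (hp01 : ∀ i, p i ∈ Set.Icc (0 : ℝ) 1)
    (hp : ∀ i, μ {ω | z i ω = 1} = ENNReal.ofReal (p i))
    (hindep : iIndepFun z μ)
    (hpbar : 0 < (∑ i, p i) / T) :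
    ∫ ω, (1 : ℝ) / ((∑ i, z i ω) + 1) ∂μ ≤
      (1 - (1 - (∑ i, p i) / T) ^ (T + 1)) / ((T + 1) * ((∑ i, p i) / T)) := by
  set pbar := (∑ i, p i) / T
  have hT : (T : ℝ) ≠ 0 := fun h ↦ by simp [pbar, h] at hpbar
  have hfactor : ∀ x ∈ Set.Icc (0 : ℝ) 1, ∀ i, 0 ≤ 1 - p i + p i * x := fun x hx i ↦ by
    linarith [(hp01 i).2, mul_nonneg (hp01 i).1 hx.1]
  have hmean (x : ℝ) : (∑ i, (1 - p i + p i * x)) / T = 1 - pbar + pbar * x := by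
    simp only [Finset.sum_add_distrib, Finset.sum_sub_distrib, ← Finset.sum_mul, pbar,
      Finset.sum_const, Finset.card_univ, Fintype.card_fin, nsmul_eq_mul, mul_one]
    field_simp
  calc ∫ ω, (1 : ℝ) / ((∑ i, z i ω) + 1) ∂μ
      = ∫ x in (0 : ℝ)..1, ∫ ω, x ^ (∑ i, z i ω) ∂μ :=
        integral_one_div_succ_eq_intervalIntegral_integral_pow
          (Finset.measurable_sum _ fun i _ ↦ hmeas i)
    _ = ∫ x in (0 : ℝ)..1, ∏ i, (1 - p i + p i * x) := by
        simp_rw [iIndepFun.integral_pow_sum hmeas hindep,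
          integral_pow_of_bernoulli (hmeas _) (hval _) (hp01 _).1 (hp _)]
    _ ≤ ∫ x in (0 : ℝ)..1, (1 - pbar + pbar * x) ^ T := by
        refine intervalIntegral.integral_mono_on zero_le_one
          ((by fun_prop : Continuous _).intervalIntegrable 0 1)
          ((by fun_prop : Continuous _).intervalIntegrable 0 1) fun x hx ↦ ?_
        simpa [hmean] using Real.prod_le_arith_mean_pow Finset.univ _ fun i _ ↦ hfactor x hx i
    _ = (1 - (1 - pbar) ^ (T + 1)) / ((T + 1) * pbar) := integral_one_sub_add_mul_pow hpbar.ne' T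

/-- For independent Bernoulli random variables `z i` with parameters
`p i ∈ [0,1]`, `Y = ∑ i, z i` and `p̄ = (∑ i, p i)/T > 0`, the negative moment satisfies
`E[1/(Y+1)] ≤ (1 - (1 - p̄)^(T+1)) / ((T+1) p̄)`. -/
theorem negative_moment_le_of_indep_bernoulli
    {Ω : Type*} [MeasurableSpace Ω] (μ : Measure Ω) [IsProbabilityMeasure μ]
    (T : ℕ) (hT : 0 < T) (z : Fin T → Ω → ℕ) (p : Fin T → ℝ)
    (hmeas : ∀ i, Measurable (z i))
    (hval : ∀ i, ∀ ω, z i ω = 0 ∨ z i ω = 1)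
    (hp01 : ∀ i, p i ∈ Set.Icc (0 : ℝ) 1)
    (hp : ∀ i, μ {ω | z i ω = 1} = ENNReal.ofReal (p i))
    (hindep : iIndepFun z μ)
    (hpbar : 0 < (∑ i, p i) / T) :
    ∫ ω, (1 : ℝ) / ((∑ i, z i ω) + 1) ∂μ ≤
      (1 - (1 - (∑ i, p i) / T) ^ (T + 1)) / ((T + 1) * ((∑ i, p i) / T)) :=
  negative_moment_le_of_indep_bernoulli_general μ T z p hmeas hval hp01 hp hindep hpbar
end

section
/- Let z_1, …, z_T be independent Bernoulli random variables with P(z_i = 1) = p_i ∈ [0,1], let Y = z_1 + … + z_T, and let ȳ = E[Y] = p_1 + … + p_T. If ȳ > 0, then E[1/(Y+1)] < 1/ȳ. -/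
/-!
Write `W i = Y - z i`. Since `z i` is independent of `W i`,
`E[z i / (W i + 1)] = p i E[1 / (W i + 1)]`, and pointwise `∑ i, z i / (W i + 1)` is `1` if
`Y ≠ 0` and `0` otherwise, so `∑ i, p i E[1 / (W i + 1)] ≤ 1`. On the other hand `Y = W i + z i`
gives `E[1 / (W i + 1)] - E[1 / (Y + 1)] = p i E[1 / (W i + 1) - 1 / (W i + 2)]`, which is
positive when `p i > 0`. Hence `ȳ E[1 / (Y + 1)] < ∑ i, p i E[1 / (W i + 1)] ≤ 1`.
-/

open MeasureTheory ProbabilityTheory Finset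

section

variable {Ω : Type*} [MeasurableSpace Ω] {μ : Measure Ω}

lemma integral_pos_of_forall_pos [NeZero μ] {f : Ω → ℝ} (hf : Integrable f μ)
    (hpos : ∀ ω, 0 < f ω) : 0 < ∫ ω, f ω ∂μ := by
  rw [integral_pos_iff_support_of_nonneg (fun ω ↦ (hpos ω).le) hf,
    Function.support_eq_univ fun ω ↦ (hpos ω).ne']
  exact Measure.measure_univ_pos.2 (NeZero.ne μ)

lemma integrable_comp_of_abs_le [IsFiniteMeasure μ] {W : Ω → ℕ} (hW : Measurable W)
    {g : ℕ → ℝ} {C : ℝ} (hg : ∀ n, |g n| ≤ C) : Integrable (fun ω ↦ g (W ω)) μ :=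
  .of_bound (measurable_from_nat.comp hW).aestronglyMeasurable C
    (ae_of_all _ fun ω ↦ hg (W ω))

lemma integrable_natCast_of_bernoulli [IsFiniteMeasure μ] {b : Ω → ℕ} (hb : Measurable b)
    (hval : ∀ ω, b ω = 0 ∨ b ω = 1) : Integrable (fun ω ↦ (b ω : ℝ)) μ :=
  .of_bound (measurable_from_nat.comp hb).aestronglyMeasurable 1
    (ae_of_all _ fun ω ↦ by rcases hval ω with h | h <;> simp [h])

lemma integrable_comp_mul_natCast_of_bernoulli [IsFiniteMeasure μ] {W b : Ω → ℕ}
    (hW : Measurable W) {g : ℕ → ℝ} {C : ℝ} (hg : ∀ n, |g n| ≤ C) (hb : Measurable b)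
    (hval : ∀ ω, b ω = 0 ∨ b ω = 1) : Integrable (fun ω ↦ g (W ω) * b ω) μ :=
  (integrable_natCast_of_bernoulli hb hval).bdd_mul
    (integrable_comp_of_abs_le hW hg).aestronglyMeasurable (ae_of_all _ fun ω ↦ hg (W ω))

lemma integral_natCast_of_bernoulli {b : Ω → ℕ} {p : ℝ} (hb : Measurable b)
    (hval : ∀ ω, b ω = 0 ∨ b ω = 1) (hp0 : 0 ≤ p) (hp : μ {ω | b ω = 1} = ENNReal.ofReal p) :
    ∫ ω, (b ω : ℝ) ∂μ = p := by
  have hind : (fun ω ↦ (b ω : ℝ)) = {ω | b ω = 1}.indicator 1 := by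
    funext ω
    rcases hval ω with h | h <;> simp [h]
  have hs : MeasurableSet {ω | b ω = 1} := hb (measurableSet_singleton 1)
  rw [hind, integral_indicator_one hs, measureReal_def, hp, ENNReal.toReal_ofReal hp0]

lemma ProbabilityTheory.IndepFun.integral_comp_mul_natCast {W b : Ω → ℕ} (hW : Measurable W)
    (hb : Measurable b) (hWb : IndepFun W b μ) (g : ℕ → ℝ) :
    ∫ ω, g (W ω) * b ω ∂μ = (∫ ω, g (W ω) ∂μ) * ∫ ω, (b ω : ℝ) ∂μ :=
  (hWb.comp measurable_from_nat measurable_from_nat).integral_mul_eq_mul_integral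
    (measurable_from_nat.comp hW).aestronglyMeasurable
    (measurable_from_nat.comp hb).aestronglyMeasurable

end

lemma comp_add_of_bernoulli (g : ℕ → ℝ) {b : ℕ} (hb : b = 0 ∨ b = 1) (w : ℕ) :
    g (b + w) = g w - b * (g w - g (w + 1)) := by
  rcases hb with rfl | rfl <;> simp [add_comm]

lemma abs_sub_comp_succ_le {g : ℕ → ℝ} {C : ℝ} (hg : ∀ n, |g n| ≤ C) (n : ℕ) :
    |g n - g (n + 1)| ≤ 2 * C :=
  (abs_sub _ _).trans (by linarith [hg n, hg (n + 1)])

lemma sum_mul_one_div_sum_erase_add_one_le_one {ι : Type*} [Fintype ι] [DecidableEq ι]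
    {x : ι → ℕ} (hx : ∀ i, x i = 0 ∨ x i = 1) :
    ∑ i, (1 / ((∑ j ∈ univ.erase i, x j : ℕ) + 1 : ℝ)) * x i ≤ 1 := by
  have hterm : ∀ i, (1 / ((∑ j ∈ univ.erase i, x j : ℕ) + 1 : ℝ)) * x i
      = x i / (∑ j, x j : ℕ) := by
    intro i
    rcases hx i with h | h
    · simp [h]
    · rw [← add_sum_erase _ _ (mem_univ i), h]
      push_cast
      ring
  rw [sum_congr rfl fun i _ ↦ hterm i, ← sum_div, ← Nat.cast_sum]
  exact div_self_le_one _

lemma abs_one_div_natCast_add_one_le_one (n : ℕ) : |1 / ((n : ℝ) + 1)| ≤ 1 := by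
  rw [abs_of_nonneg (by positivity)]
  exact div_le_one_of_le₀ (by linarith [n.cast_nonneg (α := ℝ)]) (by positivity)

lemma strictAnti_one_div_natCast_add_one : StrictAnti fun n : ℕ ↦ 1 / ((n : ℝ) + 1) :=
  fun m n hmn ↦ one_div_lt_one_div_of_lt (by positivity) (by simpa using hmn)

section BernoulliFamily

variable {Ω : Type*} [MeasurableSpace Ω] {μ : Measure Ω} {ι : Type*} [Fintype ι] [DecidableEq ι]
  {z : ι → Ω → ℕ}

lemma integral_comp_sum_erase_mul (hmeas : ∀ i, Measurable (z i)) (hindep : iIndepFun z μ)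
    (i : ι) (g : ℕ → ℝ) :
    ∫ ω, g (∑ j ∈ univ.erase i, z j ω) * z i ω ∂μ
      = (∫ ω, g (∑ j ∈ univ.erase i, z j ω) ∂μ) * ∫ ω, (z i ω : ℝ) ∂μ := by
  have hWz := hindep.indepFun_finsetSum_of_notMem hmeas (notMem_erase i univ)
  rw [sum_fn] at hWz
  exact hWz.integral_comp_mul_natCast (measurable_sum _ fun j _ ↦ hmeas j) (hmeas i) g

variable [IsProbabilityMeasure μ]

lemma integral_comp_sum_eq (hmeas : ∀ i, Measurable (z i)) (hval : ∀ i ω, z i ω = 0 ∨ z i ω = 1)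
    (hindep : iIndepFun z μ) (i : ι) {g : ℕ → ℝ} {C : ℝ} (hg : ∀ n, |g n| ≤ C) :
    ∫ ω, g (∑ j, z j ω) ∂μ
      = ∫ ω, g (∑ j ∈ univ.erase i, z j ω) ∂μ
        - (∫ ω, (z i ω : ℝ) ∂μ)
          * ∫ ω, (g (∑ j ∈ univ.erase i, z j ω) - g (∑ j ∈ univ.erase i, z j ω + 1)) ∂μ := by
  have hW : Measurable fun ω ↦ ∑ j ∈ univ.erase i, z j ω := measurable_sum _ fun j _ ↦ hmeas j
  simp_rw [← add_sum_erase _ _ (mem_univ i), comp_add_of_bernoulli g (hval i _),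
    mul_comm _ (g _ - _)]
  rw [integral_sub (integrable_comp_of_abs_le hW hg)
    (integrable_comp_mul_natCast_of_bernoulli hW (abs_sub_comp_succ_le hg) (hmeas i) (hval i)),
    integral_comp_sum_erase_mul hmeas hindep i fun n ↦ g n - g (n + 1), mul_comm]

lemma integral_comp_sum_le_integral_comp_sum_erase (hmeas : ∀ i, Measurable (z i))
    (hval : ∀ i ω, z i ω = 0 ∨ z i ω = 1) (hindep : iIndepFun z μ) (i : ι) {g : ℕ → ℝ} {C : ℝ}
    (hg : ∀ n, |g n| ≤ C) (hanti : Antitone g) :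
    ∫ ω, g (∑ j, z j ω) ∂μ ≤ ∫ ω, g (∑ j ∈ univ.erase i, z j ω) ∂μ := by
  rw [integral_comp_sum_eq hmeas hval hindep i hg, sub_le_self_iff]
  exact mul_nonneg (integral_nonneg fun ω ↦ Nat.cast_nonneg _)
    (integral_nonneg fun ω ↦ sub_nonneg.2 (hanti (Nat.le_succ _)))

lemma integral_comp_sum_lt_integral_comp_sum_erase (hmeas : ∀ i, Measurable (z i))
    (hval : ∀ i ω, z i ω = 0 ∨ z i ω = 1) (hindep : iIndepFun z μ) {i : ι}
    (hi : 0 < ∫ ω, (z i ω : ℝ) ∂μ) {g : ℕ → ℝ} {C : ℝ} (hg : ∀ n, |g n| ≤ C)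
    (hanti : StrictAnti g) :
    ∫ ω, g (∑ j, z j ω) ∂μ < ∫ ω, g (∑ j ∈ univ.erase i, z j ω) ∂μ := by
  have hW : Measurable fun ω ↦ ∑ j ∈ univ.erase i, z j ω := measurable_sum _ fun j _ ↦ hmeas j
  rw [integral_comp_sum_eq hmeas hval hindep i hg, sub_lt_self_iff]
  exact mul_pos hi <| integral_pos_of_forall_pos
    (integrable_comp_of_abs_le hW (abs_sub_comp_succ_le hg))
    fun ω ↦ sub_pos.2 (hanti (Nat.lt_succ_self _))

lemma sum_integral_mul_integral_one_div_sum_erase_add_one_le_one (hmeas : ∀ i, Measurable (z i))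
    (hval : ∀ i ω, z i ω = 0 ∨ z i ω = 1) (hindep : iIndepFun z μ) :
    ∑ i, (∫ ω, (z i ω : ℝ) ∂μ) * ∫ ω, 1 / ((∑ j ∈ univ.erase i, z j ω : ℕ) + 1 : ℝ) ∂μ ≤ 1 := by
  simp_rw [mul_comm (∫ ω, (z _ ω : ℝ) ∂μ),
    ← integral_comp_sum_erase_mul hmeas hindep _ fun n ↦ 1 / ((n : ℝ) + 1)]
  rw [← integral_finsetSum _ fun i _ ↦ integrable_comp_mul_natCast_of_bernoulli
    (measurable_sum _ fun j _ ↦ hmeas j) abs_one_div_natCast_add_one_le_one (hmeas i) (hval i)]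
  calc _ ≤ ∫ _, (1 : ℝ) ∂μ := integral_mono_of_nonneg (ae_of_all _ fun ω ↦ by positivity)
          (integrable_const 1)
          (ae_of_all _ fun ω ↦ sum_mul_one_div_sum_erase_add_one_le_one fun i ↦ hval i ω)
    _ = 1 := by simp

end BernoulliFamily

/-- For independent Bernoulli random variables `z i` with parameters
`p i ∈ [0,1]`, `Y = ∑ i, z i` and `ȳ = E[Y] = ∑ i, p i > 0`, the negative moment
satisfies `E[1/(Y+1)] < 1/ȳ`. -/
theorem negative_moment_lt_inv_mean
    {Ω : Type*} [MeasurableSpace Ω] (μ : Measure Ω) [IsProbabilityMeasure μ]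
    (T : ℕ) (z : Fin T → Ω → ℕ) (p : Fin T → ℝ)
    (hmeas : ∀ i, Measurable (z i))
    (hval : ∀ i, ∀ ω, z i ω = 0 ∨ z i ω = 1)
    (hp01 : ∀ i, p i ∈ Set.Icc (0 : ℝ) 1)
    (hp : ∀ i, μ {ω | z i ω = 1} = ENNReal.ofReal (p i))
    (hindep : iIndepFun z μ)
    (hybar : 0 < ∑ i, p i) :
    ∫ ω, (1 : ℝ) / ((∑ i, z i ω) + 1) ∂μ < 1 / (∑ i, p i) := by
  have hmean : ∀ i, ∫ ω, (z i ω : ℝ) ∂μ = p i := fun i ↦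
    integral_natCast_of_bernoulli (hmeas i) (hval i) (hp01 i).1 (hp i)
  obtain ⟨i₀, -, hi₀⟩ := exists_lt_of_sum_lt (s := univ) (f := 0) (g := p) (by simpa using hybar)
  rw [lt_div_iff₀ hybar, mul_comm, sum_mul]
  calc ∑ i, p i * ∫ ω, 1 / ((∑ j, z j ω : ℕ) + 1 : ℝ) ∂μ
      < ∑ i, p i * ∫ ω, 1 / ((∑ j ∈ univ.erase i, z j ω : ℕ) + 1 : ℝ) ∂μ := by
        refine sum_lt_sum (fun i _ ↦ ?_) ⟨i₀, mem_univ i₀, ?_⟩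
        · exact mul_le_mul_of_nonneg_left
            (integral_comp_sum_le_integral_comp_sum_erase hmeas hval hindep i
              abs_one_div_natCast_add_one_le_one strictAnti_one_div_natCast_add_one.antitone)
            (hp01 i).1
        · exact mul_lt_mul_of_pos_left
            (integral_comp_sum_lt_integral_comp_sum_erase hmeas hval hindep (by rwa [hmean])
              abs_one_div_natCast_add_one_le_one strictAnti_one_div_natCast_add_one) hi₀
    _ ≤ 1 := by
        simpa only [hmean] using
          sum_integral_mul_integral_one_div_sum_erase_add_one_le_one hmeas hval hindep
end

section
/- Let z_1, …, z_T be independent Bernoulli random variables with P(z_i = 1) = p_i ∈ [0,1], let Y = z_1 + … + z_T, and let ȳ = E[Y] = p_1 + … + p_T. If ȳ > 0, then |E[Y log Y] − ȳ log ȳ| ≤ 1, where Y log Y is interpreted with the convention 0·log 0 = 0. -/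
/-!
Jensen's inequality for the convex function `y ↦ y log y` gives `ȳ log ȳ ≤ E[Y log Y]`.
Conversely `log (y / ȳ) ≤ y / ȳ - 1` yields the pointwise bound
`y log y ≤ y log ȳ + (y - ȳ) + (y - ȳ)² / ȳ`, whose expectation is `ȳ log ȳ + Var(Y) / ȳ`.
Finally `Y` is a sum of independent `[0, 1]`-valued variables, so
`Var(Y) = ∑ Var(z_i) ≤ ∑ E[z_i] = ȳ`.
-/

open MeasureTheory ProbabilityTheory Real

namespace Real

theorem mul_log_le_mul_log_add_sub_add_sq_div {y b : ℝ} (hy : 0 ≤ y) (hb : 0 < b) :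
    y * log y ≤ y * log b + (y - b) + (y - b) ^ 2 / b := by
  rcases hy.eq_or_lt with rfl | hy
  · simp [sq, hb.ne']
  have hlog : log y - log b ≤ y / b - 1 := by
    rw [← log_div hy.ne' hb.ne']
    exact log_le_sub_one_of_pos (div_pos hy hb)
  have hrhs : (y - b) + (y - b) ^ 2 / b = y * (y / b - 1) := by
    field_simp
    ring
  have hscaled := mul_le_mul_of_nonneg_left hlog hy.le
  rw [mul_sub] at hscaled
  linarith

theorem abs_mul_log_le_sq_add_one {y : ℝ} (hy : 0 ≤ y) : |y * log y| ≤ y ^ 2 + 1 := by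
  have hlower := self_sub_one_le_mul_log hy
  have hupper : y * log y ≤ y ^ 2 := by
    rcases hy.eq_or_lt with rfl | hy
    · simp
    nlinarith [log_le_sub_one_of_pos hy]
  exact abs_le.2 ⟨by linarith [sq_nonneg y], by linarith⟩

end Real

section

variable {Ω : Type*} [MeasurableSpace Ω] {μ : Measure Ω}

theorem integral_natCast_eq_measureReal_of_eq_zero_or_eq_one {z : Ω → ℕ} (hz : Measurable z)
    (h : ∀ ω, z ω = 0 ∨ z ω = 1) : ∫ ω, (z ω : ℝ) ∂μ = μ.real {ω | z ω = 1} := by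
  have hind : (fun ω => (z ω : ℝ)) = {ω | z ω = 1}.indicator 1 := by
    funext ω
    rcases h ω with h | h <;> simp [h]
  rw [hind]
  exact integral_indicator_one (hz (measurableSet_singleton 1))

theorem integrable_mul_log_of_memLp_two [IsFiniteMeasure μ] {Y : Ω → ℝ} (hY0 : 0 ≤ᵐ[μ] Y)
    (hY : MemLp Y 2 μ) : Integrable (fun ω => Y ω * log (Y ω)) μ :=
  (hY.integrable_sq.add (integrable_const 1)).mono'
    (continuous_mul_log.comp_aestronglyMeasurable hY.1)
    (by filter_upwards [hY0] with ω hω using abs_mul_log_le_sq_add_one hω)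

variable [IsProbabilityMeasure μ]

theorem integral_mul_log_integral_le_integral_mul_log {Y : Ω → ℝ} (hY0 : 0 ≤ᵐ[μ] Y)
    (hY : Integrable Y μ) (hYlog : Integrable (fun ω => Y ω * log (Y ω)) μ) :
    μ[Y] * log μ[Y] ≤ ∫ ω, Y ω * log (Y ω) ∂μ :=
  convexOn_mul_log.map_integral_le continuous_mul_log.continuousOn isClosed_Ici hY0 hY hYlog

theorem integral_mul_log_le_add_variance_div {Y : Ω → ℝ} (hY0 : 0 ≤ᵐ[μ] Y)
    (hY : MemLp Y 2 μ) (hm : 0 < μ[Y]) :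
    ∫ ω, Y ω * log (Y ω) ∂μ ≤ μ[Y] * log μ[Y] + Var[Y; μ] / μ[Y] := by
  set m := μ[Y]
  have hYi : Integrable Y μ := hY.integrable one_le_two
  have hcentred : Integrable (fun ω => Y ω - m) μ := hYi.sub (integrable_const m)
  have hlin : Integrable (fun ω => Y ω * log m + (Y ω - m)) μ := (hYi.mul_const _).add hcentred
  have hsq : Integrable (fun ω => (Y ω - m) ^ 2 / m) μ :=
    (hY.sub (memLp_const m)).integrable_sq.div_const m
  calc ∫ ω, Y ω * log (Y ω) ∂μ
      ≤ ∫ ω, Y ω * log m + (Y ω - m) + (Y ω - m) ^ 2 / m ∂μ :=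
        integral_mono_ae (integrable_mul_log_of_memLp_two hY0 hY) (hlin.add hsq)
          (by filter_upwards [hY0] with ω hω using mul_log_le_mul_log_add_sub_add_sq_div hω hm)
    _ = m * log m + Var[Y; μ] / m := by
        rw [integral_add hlin hsq, integral_add (hYi.mul_const _) hcentred,
          integral_mul_const, integral_sub hYi (integrable_const m), integral_div,
          variance_eq_integral hY.aemeasurable]
        simp [m]

theorem abs_integral_mul_log_sub_le_variance_div {Y : Ω → ℝ} (hY0 : 0 ≤ᵐ[μ] Y)
    (hY : MemLp Y 2 μ) (hm : 0 < μ[Y]) :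
    |∫ ω, Y ω * log (Y ω) ∂μ - μ[Y] * log μ[Y]| ≤ Var[Y; μ] / μ[Y] := by
  have hlower := integral_mul_log_integral_le_integral_mul_log hY0 (hY.integrable one_le_two)
    (integrable_mul_log_of_memLp_two hY0 hY)
  have hupper := integral_mul_log_le_add_variance_div hY0 hY hm
  have hvar : 0 ≤ Var[Y; μ] / μ[Y] := div_nonneg (variance_nonneg Y μ) hm.le
  exact abs_sub_le_iff.2 ⟨by linarith, by linarith⟩

theorem variance_le_integral_of_mem_Icc {X : Ω → ℝ} (h : ∀ᵐ ω ∂μ, X ω ∈ Set.Icc 0 1)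
    (hX : AEMeasurable X μ) : Var[X; μ] ≤ μ[X] :=
  calc Var[X; μ] ≤ (1 - μ[X]) * (μ[X] - 0) := variance_le_sub_mul_sub h hX
    _ ≤ μ[X] := by nlinarith [sq_nonneg μ[X]]

theorem variance_sum_le_integral_sum_of_mem_Icc {ι : Type*} [Fintype ι] {X : ι → Ω → ℝ}
    (hX : ∀ i, AEMeasurable (X i) μ) (h : ∀ i, ∀ᵐ ω ∂μ, X i ω ∈ Set.Icc 0 1)
    (hindep : Pairwise fun i j => X i ⟂ᵢ[μ] X j) :
    Var[fun ω => ∑ i, X i ω; μ] ≤ ∫ ω, ∑ i, X i ω ∂μ := by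
  have hL2 : ∀ i, MemLp (X i) 2 μ := fun i =>
    memLp_of_bounded (h i) (hX i).aestronglyMeasurable 2
  have hsum := IndepFun.variance_sum (s := Finset.univ) (fun i _ => hL2 i)
    (fun i _ j _ hij => hindep hij)
  simp only [Finset.sum_fn] at hsum
  rw [hsum, integral_finsetSum _ fun i _ => (hL2 i).integrable one_le_two]
  exact Finset.sum_le_sum fun i _ => variance_le_integral_of_mem_Icc (h i) (hX i)

end

/-- For independent Bernoulli random variables `z i` with parameters
`p i ∈ [0,1]`, `Y = ∑ i, z i` and `ȳ = E[Y] = ∑ i, p i > 0`,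
`|E[Y log Y] - ȳ log ȳ| ≤ 1` (with the convention `0 · log 0 = 0`, automatic since
`Real.log 0 = 0`). -/
theorem abs_integral_mul_log_sub_le_one
    {Ω : Type*} [MeasurableSpace Ω] (μ : Measure Ω) [IsProbabilityMeasure μ]
    (T : ℕ) (z : Fin T → Ω → ℕ) (p : Fin T → ℝ)
    (hmeas : ∀ i, Measurable (z i))
    (hval : ∀ i, ∀ ω, z i ω = 0 ∨ z i ω = 1)
    (hp01 : ∀ i, p i ∈ Set.Icc (0 : ℝ) 1)
    (hp : ∀ i, μ {ω | z i ω = 1} = ENNReal.ofReal (p i))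
    (hindep : iIndepFun z μ)
    (hybar : 0 < ∑ i, p i) :
    |(∫ ω, ((∑ i, z i ω : ℕ) : ℝ) * Real.log ((∑ i, z i ω : ℕ) : ℝ) ∂μ) -
        (∑ i, p i) * Real.log (∑ i, p i)| ≤ 1 := by
  set X : Fin T → Ω → ℝ := fun i ω => z i ω
  have hX01 : ∀ i ω, X i ω ∈ Set.Icc 0 1 := fun i ω => by
    rcases hval i ω with h | h <;> simp [X, h]
  have hXm : ∀ i, Measurable (X i) := fun i => measurable_from_top.comp (hmeas i)
  have hEX : ∀ i, μ[X i] = p i := fun i => by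
    rw [integral_natCast_eq_measureReal_of_eq_zero_or_eq_one (hmeas i) (hval i), measureReal_def,
      hp i, ENNReal.toReal_ofReal (hp01 i).1]
  have hX2 : ∀ i, MemLp (X i) 2 μ := fun i =>
    memLp_of_bounded (ae_of_all μ (hX01 i)) (hXm i).aestronglyMeasurable 2
  have hEY : ∫ ω, ∑ i, X i ω ∂μ = ∑ i, p i := by
    rw [integral_finsetSum _ fun i _ => (hX2 i).integrable one_le_two]
    exact Finset.sum_congr rfl fun i _ => hEX i
  have hvar : Var[fun ω => ∑ i, X i ω; μ] ≤ ∑ i, p i :=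
    hEY ▸ variance_sum_le_integral_sum_of_mem_Icc (fun i => (hXm i).aemeasurable)
      (fun i => ae_of_all μ (hX01 i))
      (fun i j hij => (hindep.indepFun hij).comp measurable_from_top measurable_from_top)
  have hY0 : 0 ≤ᵐ[μ] fun ω => ∑ i, X i ω :=
    ae_of_all μ fun ω => Finset.sum_nonneg fun i _ => (hX01 i ω).1
  have hY2 : MemLp (fun ω => ∑ i, X i ω) 2 μ := memLp_finsetSum _ fun i _ => hX2 i
  have hbound := abs_integral_mul_log_sub_le_variance_div hY0 hY2 (hEY ▸ hybar)
  rw [hEY] at hbound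
  push_cast
  exact hbound.trans ((div_le_one hybar).2 hvar)
end

section
/- Let c > 0 and ρ_0 ∈ (0,1), and define recursively ρ_{n+1} = ρ_n · exp(−c·(1 − ρ_n)/ρ_n) for n ≥ 0. Then the successive ratios λ_n = ρ_{n+1}/ρ_n form a strictly decreasing sequence: λ_{n+1} < λ_n for all n ≥ 0. In particular ρ_{n+1}/ρ_n < ρ_n/ρ_{n−1} for all n ≥ 1, i.e., the shrinkage is accelerating. -/
/-- For the shrinkage-ratio recurrence
`ρ_{n+1} = ρ_n · exp(-c (1 - ρ_n)/ρ_n)` with `c > 0` and `ρ_0 ∈ (0,1)`, the successive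
ratios `λ_n = ρ_{n+1}/ρ_n` are strictly decreasing: `λ_{n+1} < λ_n` for all `n`, i.e.,
the shrinkage is accelerating. -/
theorem shrinkage_ratio_accelerating
    (c : ℝ) (hc : 0 < c) (ρ : ℕ → ℝ)
    (h0 : ρ 0 ∈ Set.Ioo (0 : ℝ) 1)
    (hrec : ∀ n, ρ (n + 1) = ρ n * Real.exp (-c * (1 - ρ n) / ρ n)) :
    ∀ n, ρ (n + 2) / ρ (n + 1) < ρ (n + 1) / ρ n := by
  -- invariant: ρ n ∈ (0,1) for all n
  have hIoo : ∀ n, ρ n ∈ Set.Ioo (0 : ℝ) 1 := by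
    intro n
    induction n with
    | zero => exact h0
    | succ n ih =>
      obtain ⟨h1, h2⟩ := ih
      rw [hrec n]
      constructor
      · positivity
      · have hneg : -c * (1 - ρ n) / ρ n < 0 :=
          div_neg_of_neg_of_pos (by nlinarith) h1
        calc ρ n * Real.exp (-c * (1 - ρ n) / ρ n) < ρ n * 1 :=
              mul_lt_mul_of_pos_left (Real.exp_lt_one_iff.mpr hneg) h1
            _ ≤ 1 := by linarith
  have hdec : ∀ n, ρ (n + 1) < ρ n := by
    intro n
    obtain ⟨h1, h2⟩ := hIoo n
    rw [hrec n]
    have hneg : -c * (1 - ρ n) / ρ n < 0 :=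
      div_neg_of_neg_of_pos (by nlinarith) h1
    calc ρ n * Real.exp (-c * (1 - ρ n) / ρ n) < ρ n * 1 :=
          mul_lt_mul_of_pos_left (Real.exp_lt_one_iff.mpr hneg) h1
        _ = ρ n := mul_one _
  intro n
  obtain ⟨h1, h2⟩ := hIoo n
  obtain ⟨h1', h2'⟩ := hIoo (n + 1)
  have e1 : ρ (n + 1) / ρ n = Real.exp (-c * (1 - ρ n) / ρ n) := by
    rw [hrec n]; field_simp
  have e2 : ρ (n + 2) / ρ (n + 1) = Real.exp (-c * (1 - ρ (n + 1)) / ρ (n + 1)) := by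
    rw [hrec (n + 1)]; field_simp
  rw [e1, e2]
  apply Real.exp_lt_exp.mpr
  have hlt := hdec n
  rw [div_lt_div_iff₀ h1' h1]
  nlinarith
end

section
/- Let c > 0 and ρ_0 ∈ (0,1), and define recursively ρ_{n+1} = ρ_n · exp(−c·(1 − ρ_n)/ρ_n) for n ≥ 0. Then ρ_n → 0 as n → ∞. -/
/-- The shrinkage-ratio recurrence
`ρ_{n+1} = ρ_n · exp(-c (1 - ρ_n)/ρ_n)` with `c > 0` and `ρ_0 ∈ (0,1)` converges to `0`:
the redundant hidden state dies out. -/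
theorem shrinkage_ratio_tendsto_zero
    (c : ℝ) (hc : 0 < c) (ρ : ℕ → ℝ)
    (h0 : ρ 0 ∈ Set.Ioo (0 : ℝ) 1)
    (hrec : ∀ n, ρ (n + 1) = ρ n * Real.exp (-c * (1 - ρ n) / ρ n)) :
    Filter.Tendsto ρ Filter.atTop (nhds 0) := by
  -- All terms are in (0,1)
  have hio : ∀ n, ρ n ∈ Set.Ioo (0 : ℝ) 1 := by
    intro n
    induction n with
    | zero => exact h0
    | succ k ih =>
      obtain ⟨hp, hl⟩ := ih
      have hexp : Real.exp (-c * (1 - ρ k) / ρ k) < 1 := by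
        rw [Real.exp_lt_one_iff]
        apply div_neg_of_neg_of_pos _ hp
        have : 0 < 1 - ρ k := by linarith
        nlinarith
      constructor
      · rw [hrec k]; positivity
      · rw [hrec k]
        calc ρ k * Real.exp (-c * (1 - ρ k) / ρ k) < ρ k * 1 := by
              exact mul_lt_mul_of_pos_left hexp hp
          _ < 1 := by linarith
  -- The sequence is decreasing
  have hanti : Antitone ρ := by
    apply antitone_nat_of_succ_le
    intro n
    obtain ⟨hp, hl⟩ := hio n
    rw [hrec n]
    have hexp : Real.exp (-c * (1 - ρ n) / ρ n) ≤ 1 := by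
      rw [Real.exp_le_one_iff]
      apply div_nonpos_of_nonpos_of_nonneg _ hp.le
      nlinarith
    nlinarith
  have hbdd : BddBelow (Set.range ρ) :=
    ⟨0, by rintro x ⟨n, rfl⟩; exact (hio n).1.le⟩
  set L := ⨅ n, ρ n with hL
  have hconv : Filter.Tendsto ρ Filter.atTop (nhds L) :=
    tendsto_atTop_ciInf hanti hbdd
  have hL0 : 0 ≤ L := le_ciInf fun n => (hio n).1.le
  rcases eq_or_lt_of_le hL0 with h | h
  · rwa [← h] at hconv
  · exfalso
    -- ρ(n+1) tends to L, but also to f(L) by continuity at L > 0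
    have hconv' : Filter.Tendsto (fun n => ρ (n + 1)) Filter.atTop (nhds L) :=
      hconv.comp (Filter.tendsto_add_atTop_nat 1)
    have hcont : Filter.Tendsto (fun n => ρ n * Real.exp (-c * (1 - ρ n) / ρ n))
        Filter.atTop (nhds (L * Real.exp (-c * (1 - L) / L))) := by
      have h1 : Filter.Tendsto (fun n => -c * (1 - ρ n) / ρ n) Filter.atTop
          (nhds (-c * (1 - L) / L)) :=
        (((tendsto_const_nhds.mul (tendsto_const_nhds.sub hconv))).div hconv h.ne')
      exact hconv.mul (Real.continuous_exp.continuousAt.tendsto.comp h1)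
    have heq : L * Real.exp (-c * (1 - L) / L) = L := by
      have : Filter.Tendsto (fun n => ρ (n + 1)) Filter.atTop
          (nhds (L * Real.exp (-c * (1 - L) / L))) := by
        simpa only [hrec] using hcont
      exact tendsto_nhds_unique this hconv'
    have hexp1 : Real.exp (-c * (1 - L) / L) = 1 := by
      have := heq
      nlinarith [Real.exp_pos (-c * (1 - L) / L)]
    have hx0 : -c * (1 - L) / L = 0 := by
      apply Real.exp_injective
      rw [hexp1, Real.exp_zero]
    have hL1 : L = 1 := by
      have := div_eq_zero_iff.mp hx0
      rcases this with h1 | h1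
      · nlinarith
      · exact absurd h1 h.ne'
    have : L ≤ ρ 0 := ciInf_le hbdd 0
    linarith [(hio 0).2]
end
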